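/- Let $b_1, b_2 \in \mathbb{C}\setminus\{0\}$ with $b_1 b_2^{-1} = c_1 + i c_2$ where $c_1, c_2 \in \mathbb{R}$ and $c_2 \ne 0$. Let $\gamma_j = \alpha_j + i\beta_j$ with $\alpha_j \in [0,1)$, $\beta_j \in \mathbb{R}$, $j \in \{1,2\}$. Then there exist $n, m \in \mathbb{Z}$ with $2\pi b_1^{-1}(\gamma_1 + n) = 2\pi b_2^{-1}(\gamma_2 + m)$ if and only if $\alpha_1 = \big\{\tfrac{c_1\beta_1 - (c_1^2+c_2^2)\beta_2}{c_2}\big\}$ and $\alpha_2 = \big\{\tfrac{\beta_1 - c_1\beta_2}{c_2}\big\}$, where $\{x\}$ denotes the fractional part of $x \in \mathbb{R}$. -/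

import Mathlib

theorem stmt_8 (b1 b2 : ℂ) (hb1 : b1 ≠ 0) (hb2 : b2 ≠ 0)
    (c1 c2 α1 α2 β1 β2 : ℝ)
    (hc : b1 * b2⁻¹ = (c1 : ℂ) + (c2 : ℂ) * Complex.I) (hc2 : c2 ≠ 0)
    (hα1 : α1 ∈ Set.Ico (0 : ℝ) 1) (hα2 : α2 ∈ Set.Ico (0 : ℝ) 1)
    (γ1 γ2 : ℂ)
    (hγ1 : γ1 = (α1 : ℂ) + (β1 : ℂ) * Complex.I)
    (hγ2 : γ2 = (α2 : ℂ) + (β2 : ℂ) * Complex.I) :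
    (∃ n m : ℤ, 2 * (Real.pi : ℂ) * b1⁻¹ * (γ1 + (n : ℂ))
        = 2 * (Real.pi : ℂ) * b2⁻¹ * (γ2 + (m : ℂ)))
      ↔ (α1 = Int.fract ((c1 * β1 - (c1 ^ 2 + c2 ^ 2) * β2) / c2)
          ∧ α2 = Int.fract ((β1 - c1 * β2) / c2)) := by
  have hπ : (2 * (Real.pi : ℂ)) ≠ 0 := by
    simp [Real.pi_ne_zero]
  -- key equivalence
  have hiff : ∀ n m : ℤ, (2 * (Real.pi : ℂ) * b1⁻¹ * (γ1 + (n : ℂ))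
      = 2 * (Real.pi : ℂ) * b2⁻¹ * (γ2 + (m : ℂ)))
      ↔ (γ1 + (n : ℂ) = ((c1 : ℂ) + (c2 : ℂ) * Complex.I) * (γ2 + (m : ℂ))) := by
    intro n m
    rw [← hc]
    constructor
    · intro h
      have h2 : 2 * (Real.pi : ℂ) * ((γ1 + (n : ℂ)) * b2)
          = 2 * (Real.pi : ℂ) * (b1 * (γ2 + (m : ℂ))) := by
        field_simp at h
        linear_combination 2 * (Real.pi : ℂ) * h
      have h3 := mul_left_cancel₀ hπ h2
      field_simp
      linear_combination h3
    · intro h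
      field_simp at h ⊢
      linear_combination h
  -- real/imag form
  have hiff2 : ∀ n m : ℤ, (γ1 + (n : ℂ) = ((c1 : ℂ) + (c2 : ℂ) * Complex.I) * (γ2 + (m : ℂ)))
      ↔ (α1 + (n : ℝ) = c1 * (α2 + m) - c2 * β2 ∧ β1 = c1 * β2 + c2 * (α2 + m)) := by
    intro n m
    rw [hγ1, hγ2, Complex.ext_iff]
    simp [Complex.mul_re, Complex.mul_im]
  constructor
  · rintro ⟨n, m, h⟩
    obtain ⟨h1, h2⟩ := (hiff2 n m).mp ((hiff n m).mp h)
    have hx2 : (β1 - c1 * β2) / c2 = α2 + m := by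
      field_simp
      linarith
    have hx1 : (c1 * β1 - (c1 ^ 2 + c2 ^ 2) * β2) / c2 = α1 + n := by
      field_simp
      linear_combination -c2 * h1 + c1 * h2
    rw [hx1, hx2]
    rw [Int.fract_add_intCast, Int.fract_add_intCast, Int.fract_eq_self.mpr hα1,
      Int.fract_eq_self.mpr hα2]
    exact ⟨rfl, rfl⟩
  · rintro ⟨h1, h2⟩
    refine ⟨⌊(c1 * β1 - (c1 ^ 2 + c2 ^ 2) * β2) / c2⌋, ⌊(β1 - c1 * β2) / c2⌋, ?_⟩
    have e1 : α1 + (⌊(c1 * β1 - (c1 ^ 2 + c2 ^ 2) * β2) / c2⌋ : ℝ)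
        = (c1 * β1 - (c1 ^ 2 + c2 ^ 2) * β2) / c2 := by
      rw [h1]; exact Int.fract_add_floor _
    have e2 : α2 + (⌊(β1 - c1 * β2) / c2⌋ : ℝ) = (β1 - c1 * β2) / c2 := by
      rw [h2]; exact Int.fract_add_floor _
    rw [hiff, hiff2]
    constructor
    · rw [e1, e2]
      field_simp
      ring
    · rw [e2]
      field_simp
      ring
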